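/- Let L be an n×n real symmetric positive semidefinite matrix with L𝟙 = 0 whose kernel is exactly the span of the all-ones vector 𝟙, with eigenvalues 0 = λ₁ < λ₂ ≤ … ≤ λₙ, and let M = I − (1/n)J where J is the all-ones matrix. Then for every t ≥ 0, the expected transient output covariance satisfies tr( ∫₀ᵗ e^{−Lτ} M e^{−Lτ} dτ ) = Σ_{i=2}^{n} (1 − e^{−2λ_i t})/(2λ_i). -/

import Mathlib

open Filter Finset Matrix

/-- The eigenvalues of a real matrix, listed in increasing order (counted with multiplicity);
junk value `0` if the matrix is not symmetric. -/
noncomputable def sortedEigenvalues {n : ℕ} (A : Matrix (Fin n) (Fin n) ℝ) : Fin n → ℝ :=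
  if hA : A.IsHermitian then hA.eigenvalues ∘ Tuple.sort hA.eigenvalues else fun _ => 0

/-- `L` is the Laplacian matrix of a connected weighted graph: symmetric positive semidefinite,
`L 𝟙 = 0`, and the kernel of `L` is exactly the span of the all-ones vector. -/
def IsConnLaplacian {n : ℕ} (L : Matrix (Fin n) (Fin n) ℝ) : Prop :=
  L.PosSemidef ∧ (L *ᵥ (fun _ => (1 : ℝ)) = 0) ∧
    ∀ v : Fin n → ℝ, L *ᵥ v = 0 → ∃ c : ℝ, v = fun _ => c

/-- The all-ones `n × n` matrix `J`. -/
def Jmat (n : ℕ) : Matrix (Fin n) (Fin n) ℝ := Matrix.of fun _ _ => (1 : ℝ)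

/-! The integrand is `tr (e^{-τL} M e^{-τL}) = tr (M e^{-2τL})` by cyclicity of the trace. Since
`L 𝟙 = 0`, `e^{-2τL}` fixes `𝟙`, so `tr (J e^{-2τL}) = 𝟙ᵀ e^{-2τL} 𝟙 = n` and the integrand is
`tr e^{-2τL} - 1 = ∑ᵢ e^{-2τλᵢ} - 1` by the spectral theorem. Connectedness makes the kernel of `L`
one-dimensional, so `0` is a simple eigenvalue: `λ₁ = 0` cancels the `1`, and `λ₂, …, λₙ > 0`,
so each remaining term integrates to `(1 - e^{-2λᵢt}) / (2λᵢ)`. -/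

variable {ι : Type*} [Fintype ι] [DecidableEq ι]

theorem Matrix.continuous_exp {𝕜 : Type*} [RCLike 𝕜] :
    Continuous (NormedSpace.exp : Matrix ι ι 𝕜 → Matrix ι ι 𝕜) := by
  -- any matrix norm would do: all of them induce the product topology
  let _ := Matrix.linftyOpNormedRing (n := ι) (α := 𝕜)
  let _ := Matrix.linftyOpNormedAlgebra (n := ι) (R := ℝ) (α := 𝕜)
  let _ := NormedAlgebra.restrictScalars ℚ ℝ (Matrix ι ι 𝕜)
  exact NormedSpace.exp_continuous

theorem Matrix.exp_conjStarAlgAut {𝕜 : Type*} [RCLike 𝕜] (u : unitary (Matrix ι ι 𝕜))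
    (X : Matrix ι ι 𝕜) :
    NormedSpace.exp (Unitary.conjStarAlgAut 𝕜 _ u X) =
      Unitary.conjStarAlgAut 𝕜 _ u (NormedSpace.exp X) :=
  Matrix.exp_units_conj (Unitary.toUnits u) X

theorem Matrix.IsHermitian.card_eigenvalues_eq_zero {𝕜 : Type*} [RCLike 𝕜] {A : Matrix ι ι 𝕜}
    (hA : A.IsHermitian) :
    Fintype.card {i // hA.eigenvalues i = 0} = Module.finrank 𝕜 (LinearMap.ker A.mulVecLin) := by
  have h_rank := hA.rank_eq_card_non_zero_eigs
  have h_nullity := LinearMap.finrank_range_add_finrank_ker A.mulVecLin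
  have h_compl : Fintype.card {i // hA.eigenvalues i ≠ 0} = _ := Fintype.card_subtype_compl _
  have h_le := Fintype.card_subtype_le (fun i => hA.eigenvalues i = 0)
  rw [Matrix.rank] at h_rank
  rw [Module.finrank_fintype_fun_eq_card] at h_nullity
  omega

namespace Matrix.IsHermitian

open Unitary

variable {A : Matrix ι ι ℝ}

theorem exp_smul_eq (hA : A.IsHermitian) (c : ℝ) :
    NormedSpace.exp (c • A) = conjStarAlgAut ℝ _ hA.eigenvectorUnitary
      (diagonal fun k => Real.exp (c * hA.eigenvalues k)) := by
  conv_lhs => rw [hA.spectral_theorem, ← map_smul, ← diagonal_smul]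
  rw [exp_conjStarAlgAut, exp_diagonal]
  congr 2
  ext k
  simp [Real.exp_eq_exp_ℝ]

theorem trace_exp_smul (hA : A.IsHermitian) (c : ℝ) :
    (NormedSpace.exp (c • A)).trace = ∑ k, Real.exp (c * hA.eigenvalues k) := by
  rw [hA.exp_smul_eq, conjStarAlgAut_apply, trace_mul_cycle, coe_star_mul_self, one_mul,
    trace_diagonal]

theorem star_eigenvectorUnitary_mul (hA : A.IsHermitian) :
    star (hA.eigenvectorUnitary : Matrix ι ι ℝ) * A =
      diagonal hA.eigenvalues * star (hA.eigenvectorUnitary : Matrix ι ι ℝ) := by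
  conv_lhs => arg 2; rw [hA.spectral_theorem, conjStarAlgAut_apply]
  rw [← Matrix.mul_assoc, ← Matrix.mul_assoc, coe_star_mul_self, Matrix.one_mul]
  rfl

theorem exp_smul_mulVec_of_mulVec_eq_zero (hA : A.IsHermitian) (c : ℝ) {v : ι → ℝ}
    (hv : A *ᵥ v = 0) : NormedSpace.exp (c • A) *ᵥ v = v := by
  set w := star (hA.eigenvectorUnitary : Matrix ι ι ℝ) *ᵥ v
  have hw : diagonal hA.eigenvalues *ᵥ w = 0 := by
    rw [mulVec_mulVec, ← hA.star_eigenvectorUnitary_mul, ← mulVec_mulVec, hv, mulVec_zero]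
  have hDw : (diagonal fun k => Real.exp (c * hA.eigenvalues k)) *ᵥ w = w := by
    ext k
    have hk := congr_fun hw k
    rw [mulVec_diagonal] at hk ⊢
    rcases mul_eq_zero.mp hk with h | h <;> simp [h]
  rw [hA.exp_smul_eq, conjStarAlgAut_apply, ← mulVec_mulVec, ← mulVec_mulVec, hDw,
    mulVec_mulVec, mul_star_self_of_mem hA.eigenvectorUnitary.2, one_mulVec]

section Sorted

variable {n : ℕ} {A : Matrix (Fin n) (Fin n) ℝ}

theorem sortedEigenvalues_eq (hA : A.IsHermitian) :
    sortedEigenvalues A = hA.eigenvalues ∘ Tuple.sort hA.eigenvalues :=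
  dif_pos hA

theorem monotone_sortedEigenvalues (hA : A.IsHermitian) : Monotone (sortedEigenvalues A) := by
  rw [hA.sortedEigenvalues_eq]
  exact Tuple.monotone_sort _

theorem sum_comp_sortedEigenvalues (hA : A.IsHermitian) (f : ℝ → ℝ) :
    ∑ i, f (sortedEigenvalues A i) = ∑ k, f (hA.eigenvalues k) := by
  rw [hA.sortedEigenvalues_eq]
  exact Equiv.sum_comp (Tuple.sort hA.eigenvalues) (f ∘ hA.eigenvalues)

theorem card_sortedEigenvalues_eq_zero (hA : A.IsHermitian) :
    Fintype.card {i // sortedEigenvalues A i = 0} =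
      Module.finrank ℝ (LinearMap.ker A.mulVecLin) := by
  rw [← hA.card_eigenvalues_eq_zero, hA.sortedEigenvalues_eq]
  exact Fintype.card_congr ((Tuple.sort hA.eigenvalues).subtypeEquiv fun _ => Iff.rfl)

end Sorted

end Matrix.IsHermitian

theorem trace_Jmat_mul {n : ℕ} (X : Matrix (Fin n) (Fin n) ℝ) :
    (Jmat n * X).trace = ∑ k, (X *ᵥ fun _ => 1) k := by
  simp only [trace, Matrix.diag, mul_apply, Jmat, of_apply, one_mul, mulVec, dotProduct, mul_one]
  exact Finset.sum_comm

theorem trace_centering_mul {n : ℕ} [NeZero n] {X : Matrix (Fin n) (Fin n) ℝ}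
    (hX : (X *ᵥ fun _ => 1) = fun _ => 1) :
    (((1 : Matrix (Fin n) (Fin n) ℝ) - (1 / (n : ℝ)) • Jmat n) * X).trace = X.trace - 1 := by
  rw [Matrix.sub_mul, trace_sub, Matrix.one_mul, smul_mul_assoc, trace_smul, trace_Jmat_mul, hX]
  simp [NeZero.ne]

theorem Fin.filter_one_le_eq_erase_zero {n : ℕ} [NeZero n] :
    univ.filter (fun i : Fin n => 1 ≤ (i : ℕ)) = univ.erase 0 := by
  ext i
  simp only [mem_filter, mem_univ, true_and, mem_erase, and_true, Nat.one_le_iff_ne_zero,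
    ne_eq, Fin.ext_iff, Fin.val_zero]

theorem integral_exp_mul {c : ℝ} (hc : c ≠ 0) (a b : ℝ) :
    ∫ τ in a..b, Real.exp (c * τ) = (Real.exp (c * b) - Real.exp (c * a)) / c := by
  rw [intervalIntegral.integral_comp_mul_left Real.exp hc, integral_exp, smul_eq_mul]
  field_simp

namespace IsConnLaplacian

variable {n : ℕ} {L : Matrix (Fin n) (Fin n) ℝ}

theorem isHermitian (hL : IsConnLaplacian L) : L.IsHermitian := hL.1.isHermitian

theorem ker_mulVecLin (hL : IsConnLaplacian L) :
    LinearMap.ker L.mulVecLin = ℝ ∙ fun _ => 1 := by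
  ext v
  rw [LinearMap.mem_ker, mulVecLin_apply, Submodule.mem_span_singleton]
  constructor
  · intro hv
    obtain ⟨c, rfl⟩ := hL.2.2 v hv
    exact ⟨c, by ext; simp⟩
  · rintro ⟨c, rfl⟩
    rw [mulVec_smul, hL.2.1, smul_zero]

theorem finrank_ker [NeZero n] (hL : IsConnLaplacian L) :
    Module.finrank ℝ (LinearMap.ker L.mulVecLin) = 1 := by
  rw [hL.ker_mulVecLin]
  exact finrank_span_singleton (Function.ne_iff.mpr ⟨0, one_ne_zero⟩)

theorem existsUnique_sortedEigenvalues_eq_zero [NeZero n] (hL : IsConnLaplacian L) :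
    ∃! i, sortedEigenvalues L i = 0 := by
  have h := hL.isHermitian.card_sortedEigenvalues_eq_zero
  rw [hL.finrank_ker, Fintype.card_eq_one_iff] at h
  obtain ⟨⟨i, hi⟩, huniq⟩ := h
  exact ⟨i, hi, fun j hj => congr_arg Subtype.val (huniq ⟨j, hj⟩)⟩

theorem sortedEigenvalues_nonneg (hL : IsConnLaplacian L) (i : Fin n) :
    0 ≤ sortedEigenvalues L i := by
  rw [hL.isHermitian.sortedEigenvalues_eq]
  exact hL.1.eigenvalues_nonneg _

theorem sortedEigenvalues_zero [NeZero n] (hL : IsConnLaplacian L) :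
    sortedEigenvalues L 0 = 0 := by
  obtain ⟨k, hk, -⟩ := hL.existsUnique_sortedEigenvalues_eq_zero
  refine le_antisymm ?_ (hL.sortedEigenvalues_nonneg 0)
  exact hk ▸ hL.isHermitian.monotone_sortedEigenvalues (Fin.zero_le k)

theorem sortedEigenvalues_pos [NeZero n] (hL : IsConnLaplacian L) {i : Fin n} (hi : i ≠ 0) :
    0 < sortedEigenvalues L i := by
  refine (hL.sortedEigenvalues_nonneg i).lt_of_ne fun h => hi ?_
  exact hL.existsUnique_sortedEigenvalues_eq_zero.unique h.symm hL.sortedEigenvalues_zero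

theorem trace_exp_mul_centering_mul_exp [NeZero n] (hL : IsConnLaplacian L) (τ : ℝ) :
    (NormedSpace.exp (-(τ • L)) * ((1 : Matrix (Fin n) (Fin n) ℝ) - (1 / (n : ℝ)) • Jmat n) *
        NormedSpace.exp (-(τ • L))).trace =
      ∑ i ∈ univ.erase 0, Real.exp (-2 * sortedEigenvalues L i * τ) := by
  have hsq : NormedSpace.exp (-(τ • L)) * NormedSpace.exp (-(τ • L)) =
      NormedSpace.exp ((-2 * τ) • L) := by
    rw [← Matrix.exp_add_of_commute _ _ (Commute.refl _)]
    congr 1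
    module
  calc _ = (((1 : Matrix (Fin n) (Fin n) ℝ) - (1 / (n : ℝ)) • Jmat n) *
          NormedSpace.exp ((-2 * τ) • L)).trace := by
        rw [Matrix.mul_assoc, trace_mul_comm, Matrix.mul_assoc, hsq]
    _ = ∑ k, Real.exp (-2 * τ * hL.isHermitian.eigenvalues k) - 1 := by
        rw [trace_centering_mul (hL.isHermitian.exp_smul_mulVec_of_mulVec_eq_zero _ hL.2.1),
          hL.isHermitian.trace_exp_smul]
    _ = _ := by
        rw [← hL.isHermitian.sum_comp_sortedEigenvalues fun x => Real.exp (-2 * τ * x),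
          ← add_sum_erase _ _ (mem_univ 0), hL.sortedEigenvalues_zero, mul_zero, Real.exp_zero,
          add_sub_cancel_left]
        exact sum_congr rfl fun i _ => by ring_nf

end IsConnLaplacian

theorem trace_transient_output_covariance_general {n : ℕ}
    (L : Matrix (Fin n) (Fin n) ℝ) (hL : IsConnLaplacian L) (t : ℝ) :
    ∑ i : Fin n,
        ∫ τ in (0 : ℝ)..t,
          ((NormedSpace.exp (-(τ • L))) * ((1 : Matrix (Fin n) (Fin n) ℝ) -
              (1 / (n : ℝ)) • Jmat n) * (NormedSpace.exp (-(τ • L)))) i i =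
      ∑ i ∈ Finset.univ.filter (fun i : Fin n => 1 ≤ (i : ℕ)),
        (1 - Real.exp (-2 * sortedEigenvalues L i * t)) / (2 * sortedEigenvalues L i) := by
  obtain rfl | _ := eq_zero_or_neZero n
  · simp
  have hexp : Continuous fun τ : ℝ => NormedSpace.exp (-(τ • L)) :=
    Matrix.continuous_exp.comp (by fun_prop)
  rw [Fin.filter_one_le_eq_erase_zero]
  calc _ = ∫ τ in (0 : ℝ)..t, ∑ i ∈ univ.erase 0, Real.exp (-2 * sortedEigenvalues L i * τ) := by
        rw [← intervalIntegral.integral_finsetSum fun i _ =>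
          (by fun_prop : Continuous _).intervalIntegrable _ _]
        exact intervalIntegral.integral_congr fun τ _ => hL.trace_exp_mul_centering_mul_exp τ
    _ = _ := by
        rw [intervalIntegral.integral_finsetSum fun i _ =>
          (by fun_prop : Continuous _).intervalIntegrable _ _]
        refine sum_congr rfl fun i hi => ?_
        have hpos := hL.sortedEigenvalues_pos (ne_of_mem_erase hi)
        rw [integral_exp_mul (by positivity), mul_zero, Real.exp_zero]
        field_simp
        ring

/-- Expected transient output covariance: the trace of the (entrywise) integral
`∫₀ᵗ e^{−Lτ} M e^{−Lτ} dτ` equals `Σ_{i=2}^n (1 − e^{−2λ_i t})/(2λ_i)`. -/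
theorem trace_transient_output_covariance {n : ℕ}
    (L : Matrix (Fin n) (Fin n) ℝ) (hL : IsConnLaplacian L) (t : ℝ) (ht : 0 ≤ t) :
    ∑ i : Fin n,
        ∫ τ in (0 : ℝ)..t,
          ((NormedSpace.exp (-(τ • L))) * ((1 : Matrix (Fin n) (Fin n) ℝ) -
              (1 / (n : ℝ)) • Jmat n) * (NormedSpace.exp (-(τ • L)))) i i =
      ∑ i ∈ Finset.univ.filter (fun i : Fin n => 1 ≤ (i : ℕ)),
        (1 - Real.exp (-2 * sortedEigenvalues L i * t)) / (2 * sortedEigenvalues L i) :=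
  trace_transient_output_covariance_general L hL t
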